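/- arXiv:2206.13834 — 3 statements merged into one kernel-verified Lean document; each statement's English description precedes it below -/
import Mathlib

section
/- For any a ∈ ℝ and b > 0, the function a ↦ a·Φ(a/b) + (b/√(2π))·e^{-a²/(2b²)} is convex and 1-Lipschitz in a. -/
/-!
`Φ(a/b)` is the derivative of `a ↦ a Φ(a/b) + (b/√(2π)) exp(-a²/(2b²))`: differentiating
the first term produces `a φ(a/b)/b`, which the derivative of the Gaussian term cancels
exactly. Since `b > 0`, this derivative is monotone in `a` and takes values in `[0, 1]`,
which gives convexity and the Lipschitz bound.
-/

open MeasureTheory ProbabilityTheory Real Set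

/-- The cumulative distribution function of a standard Gaussian random variable. -/
noncomputable def stdGaussianCDF (x : ℝ) : ℝ :=
  ((gaussianReal 0 1) (Set.Iic x)).toReal

theorem hasDerivAt_setIntegral_Iic {E : Type*} [NormedAddCommGroup E] [NormedSpace ℝ E]
    [CompleteSpace E] {f : ℝ → E} {x : ℝ} (hf : Integrable f) (hx : ContinuousAt f x) :
    HasDerivAt (fun y => ∫ t in Iic y, f t) (f x) x := by
  have hsplit :
      (fun y => ∫ t in Iic y, f t) = fun y => (∫ t in Iic x, f t) + ∫ t in x..y, f t :=
    funext fun y => by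
      rw [← intervalIntegral.integral_Iic_sub_Iic hf.integrableOn hf.integrableOn]
      abel
  rw [hsplit]
  exact (intervalIntegral.integral_hasDerivAt_right hf.intervalIntegrable
    hf.aestronglyMeasurable.stronglyMeasurableAtFilter hx).const_add _

theorem stdGaussianCDF_eq_cdf : stdGaussianCDF = cdf (gaussianReal 0 1) :=
  funext fun x => (cdf_eq_real _ x).symm

theorem monotone_stdGaussianCDF : Monotone stdGaussianCDF :=
  stdGaussianCDF_eq_cdf ▸ (cdf (gaussianReal 0 1)).mono

theorem stdGaussianCDF_mem_Icc (x : ℝ) : stdGaussianCDF x ∈ Icc 0 1 :=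
  stdGaussianCDF_eq_cdf ▸ ⟨cdf_nonneg _ x, cdf_le_one _ x⟩

theorem stdGaussianCDF_eq_integral (x : ℝ) :
    stdGaussianCDF x = ∫ t in Iic x, gaussianPDFReal 0 1 t := by
  rw [stdGaussianCDF, gaussianReal_apply_eq_integral 0 one_ne_zero, ENNReal.toReal_ofReal]
  exact integral_nonneg fun t => gaussianPDFReal_nonneg 0 1 t

theorem hasDerivAt_stdGaussianCDF (x : ℝ) :
    HasDerivAt stdGaussianCDF (gaussianPDFReal 0 1 x) x := by
  have hcont : Continuous (gaussianPDFReal 0 1) := by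
    unfold gaussianPDFReal
    fun_prop
  rw [funext stdGaussianCDF_eq_integral]
  exact hasDerivAt_setIntegral_Iic (integrable_gaussianPDFReal 0 1) hcont.continuousAt

theorem gaussianPDFReal_zero_one_div (a b : ℝ) :
    gaussianPDFReal 0 1 (a / b) = (√(2 * π))⁻¹ * exp (-(a ^ 2) / (2 * b ^ 2)) := by
  rw [gaussianPDFReal, NNReal.coe_one, sub_zero, mul_one, mul_one, div_pow]
  ring_nf

noncomputable def gaussianPosPart (b a : ℝ) : ℝ :=
  a * stdGaussianCDF (a / b) + (b / √(2 * π)) * exp (-(a ^ 2) / (2 * b ^ 2))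

theorem hasDerivAt_gaussianPosPart {b : ℝ} (hb : b ≠ 0) (a : ℝ) :
    HasDerivAt (gaussianPosPart b) (stdGaussianCDF (a / b)) a := by
  have hcdf :
      HasDerivAt (fun a => stdGaussianCDF (a / b)) (gaussianPDFReal 0 1 (a / b) / b) a := by
    simpa [Function.comp_def, div_eq_mul_inv] using
      (hasDerivAt_stdGaussianCDF (a / b)).comp a ((hasDerivAt_id a).div_const b)
  have hexp : HasDerivAt (fun a => exp (-(a ^ 2) / (2 * b ^ 2)))
      (exp (-(a ^ 2) / (2 * b ^ 2)) * (-(2 * a ^ 1) / (2 * b ^ 2))) a :=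
    ((hasDerivAt_pow 2 a).neg.div_const _).exp
  refine (((hasDerivAt_id' a).mul hcdf).add (hexp.const_mul (b / √(2 * π)))).congr_deriv ?_
  rw [gaussianPDFReal_zero_one_div]
  field_simp
  ring

theorem convexOn_gaussianPosPart {b : ℝ} (hb : 0 < b) :
    ConvexOn ℝ univ (gaussianPosPart b) := by
  refine Monotone.convexOn_univ_of_deriv
    (fun a => (hasDerivAt_gaussianPosPart hb.ne' a).differentiableAt) fun x y hxy => ?_
  rw [(hasDerivAt_gaussianPosPart hb.ne' x).deriv, (hasDerivAt_gaussianPosPart hb.ne' y).deriv]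
  exact monotone_stdGaussianCDF (div_le_div_of_nonneg_right hxy hb.le)

theorem lipschitzWith_gaussianPosPart {b : ℝ} (hb : b ≠ 0) :
    LipschitzWith 1 (gaussianPosPart b) := by
  refine lipschitzWith_of_nnnorm_deriv_le
    (fun a => (hasDerivAt_gaussianPosPart hb a).differentiableAt) fun a => ?_
  rw [(hasDerivAt_gaussianPosPart hb a).deriv, ← NNReal.coe_le_coe, coe_nnnorm, NNReal.coe_one,
    Real.norm_of_nonneg (stdGaussianCDF_mem_Icc _).1]
  exact (stdGaussianCDF_mem_Icc _).2

/-- The function `a ↦ a Φ(a/b) + (b/√(2π)) exp(-a²/(2b²))` is convex and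
    1-Lipschitz in `a`. -/
theorem gaussian_pos_part_convex_lipschitz (b : ℝ) (hb : 0 < b) :
    ConvexOn ℝ Set.univ (fun a : ℝ =>
        a * stdGaussianCDF (a / b)
          + (b / Real.sqrt (2 * π)) * Real.exp (-(a ^ 2) / (2 * b ^ 2)))
    ∧ LipschitzWith 1 (fun a : ℝ =>
        a * stdGaussianCDF (a / b)
          + (b / Real.sqrt (2 * π)) * Real.exp (-(a ^ 2) / (2 * b ^ 2))) :=
  ⟨convexOn_gaussianPosPart hb, lipschitzWith_gaussianPosPart hb.ne'⟩
end

section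
/- Let S be a symmetric invertible real matrix written in block form S = [[A, B],[Bᵀ, C]] with A and C square and symmetric, and write S^{-1} = [[A', B'],[(B')ᵀ, C']] with the same block structure. If A and C' are invertible, then sgn(S) = sgn(A) + sgn(C'), where sgn(M) denotes the signature of a symmetric matrix M (number of positive eigenvalues minus number of negative eigenvalues). -/
/-!
The spectral theorem is an orthogonal congruence to a diagonal matrix, so the eigenvalue
signature of a symmetric matrix `S` is the signature of its quadratic form `x ↦ xᵀ S x`, which by
Sylvester's law of inertia is invariant under congruence `S ↦ Pᵀ S P` with `P` invertible.
Block elimination with the invertible corner `A` makes `S` congruent to `diag(A, D)`, where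
`D = C - Bᵀ A⁻¹ B` is the Schur complement, so `sgn S = sgn A + sgn D`. The same elimination
computes the lower-right block of `S⁻¹` as `C' = D⁻¹ = D⁻¹ D D⁻¹`, which is congruent to `D`.
-/

open Matrix

/-- The signature of a real symmetric matrix: the number of positive eigenvalues
    minus the number of negative eigenvalues (counted with multiplicity). -/
noncomputable def matSignature {n : Type*} [Fintype n] [DecidableEq n]
    {M : Matrix n n ℝ} (hM : M.IsHermitian) : ℤ :=
  ((Finset.univ.filter fun i => 0 < hM.eigenvalues i).card : ℤ)
    - ((Finset.univ.filter fun i => hM.eigenvalues i < 0).card : ℤ)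

open QuadraticMap QuadraticForm Finset

lemma Finset.card_filter_sumElim {ι κ γ : Type*} [Fintype ι] [Fintype κ] (p : γ → Prop)
    [DecidablePred p] (f : ι → γ) (g : κ → γ) :
    #{i | p (Sum.elim f g i)} = #{i | p (f i)} + #{i | p (g i)} := by
  simp only [card_filter, Fintype.sum_sum_type]
  rfl

namespace QuadraticForm

variable {R 𝕜 V V' : Type*} [AddCommGroup V] [AddCommGroup V']

noncomputable def signature [CommRing R] [LinearOrder R] [Module R V]
    (Q : QuadraticForm R V) : ℤ :=
  sigPos Q - sigNeg Q

lemma _root_.QuadraticMap.Equivalent.signature_eq [CommRing R] [LinearOrder R] [Module R V]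
    [Module R V'] {Q : QuadraticForm R V} {Q' : QuadraticForm R V'} (h : Q.Equivalent Q') :
    signature Q = signature Q' := by
  rw [signature, signature, h.sigPos_eq, h.sigNeg_eq]

section LinearOrderedField

variable [Field 𝕜] [LinearOrder 𝕜] [IsStrictOrderedRing 𝕜]

lemma signature_weightedSumSquares {ι : Type*} [Fintype ι] (w : ι → 𝕜) :
    signature (weightedSumSquares 𝕜 w) = #{i | 0 < w i} - #{i | w i < 0} := by
  simp only [signature, sigPos_weightedSumSquares, sigNeg_weightedSumSquares,
    Set.ncard_eq_toFinset_card', Set.toFinset_ofPred]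

lemma signature_weightedSumSquares_sumElim {ι κ : Type*} [Fintype ι] [Fintype κ]
    (w : ι → 𝕜) (w' : κ → 𝕜) :
    signature (weightedSumSquares 𝕜 (Sum.elim w w')) =
      signature (weightedSumSquares 𝕜 w) + signature (weightedSumSquares 𝕜 w') := by
  rw [signature_weightedSumSquares, signature_weightedSumSquares, signature_weightedSumSquares,
    card_filter_sumElim (0 < ·), card_filter_sumElim (· < (0 : 𝕜))]
  push_cast
  ring

end LinearOrderedField

end QuadraticForm

namespace Matrix

variable {R 𝕜 m n : Type*} [Fintype m] [Fintype n] [DecidableEq m] [DecidableEq n]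

lemma toQuadraticForm'_apply [CommRing R] (M : Matrix n n R) (x : n → R) :
    M.toQuadraticForm' x = x ⬝ᵥ M *ᵥ x :=
  toLinearMap₂'_apply' M x x

lemma toQuadraticForm'_diagonal [CommRing R] (d : n → R) :
    (diagonal d).toQuadraticForm' = weightedSumSquares R d := by
  ext x
  simp [toQuadraticForm'_apply, dotProduct, mulVec_diagonal, mul_left_comm]

lemma equivalent_toQuadraticForm'_transpose_mul_mul [CommRing R] (M : Matrix n n R)
    {P : Matrix n n R} (hP : IsUnit P) :
    (Pᵀ * M * P).toQuadraticForm'.Equivalent M.toQuadraticForm' := by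
  obtain ⟨_⟩ := hP.nonempty_invertible
  refine ⟨⟨P.toLinearEquiv' ‹_›, fun x => ?_⟩⟩
  simp [toQuadraticForm'_apply, ← mulVec_mulVec, dotProduct_mulVec, vecMul_transpose]

section LinearOrderedRing

variable [CommRing R] [LinearOrder R]

lemma signature_toQuadraticForm'_transpose_mul_mul (M : Matrix n n R) {P : Matrix n n R}
    (hP : IsUnit P) :
    signature (Pᵀ * M * P).toQuadraticForm' = signature M.toQuadraticForm' :=
  (equivalent_toQuadraticForm'_transpose_mul_mul M hP).signature_eq

lemma signature_toQuadraticForm'_inv {M : Matrix n n R} (hM : M.IsSymm) (hdet : IsUnit M.det) :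
    signature M⁻¹.toQuadraticForm' = signature M.toQuadraticForm' := by
  have hinv : IsUnit M⁻¹ := (isUnit_iff_isUnit_det _).mpr (isUnit_nonsing_inv_det M hdet)
  rw [← signature_toQuadraticForm'_transpose_mul_mul M hinv, transpose_nonsing_inv, hM.eq,
    mul_nonsing_inv_cancel_right _ _ hdet]

end LinearOrderedRing

lemma signature_toQuadraticForm'_of_transpose_mul_mul_eq_diagonal [Field 𝕜] [LinearOrder 𝕜]
    [IsStrictOrderedRing 𝕜] {M P : Matrix n n 𝕜} {d : n → 𝕜} (hP : IsUnit P)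
    (h : Pᵀ * M * P = diagonal d) :
    signature M.toQuadraticForm' = #{i | 0 < d i} - #{i | d i < 0} := by
  rw [← signature_toQuadraticForm'_transpose_mul_mul M hP, h, toQuadraticForm'_diagonal,
    signature_weightedSumSquares]

lemma IsHermitian.transpose_eigenvectorUnitary_mul_mul {M : Matrix n n ℝ} (hM : M.IsHermitian) :
    (hM.eigenvectorUnitary : Matrix n n ℝ)ᵀ * M * hM.eigenvectorUnitary =
      diagonal hM.eigenvalues := by
  simpa [star_eq_conjTranspose] using hM.conjStarAlgAut_star_eigenvectorUnitary

lemma signature_toQuadraticForm'_fromBlocks_zero {A : Matrix m m ℝ} {D : Matrix n n ℝ}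
    (hA : A.IsHermitian) (hD : D.IsHermitian) :
    signature (fromBlocks A 0 0 D).toQuadraticForm' =
      signature A.toQuadraticForm' + signature D.toQuadraticForm' := by
  let P : Matrix (m ⊕ n) (m ⊕ n) ℝ :=
    fromBlocks hA.eigenvectorUnitary 0 0 hD.eigenvectorUnitary
  have hP : IsUnit P :=
    isUnit_fromBlocks_zero₂₁.mpr ⟨Unitary.isUnit_coe, Unitary.isUnit_coe⟩
  have hdiag : Pᵀ * fromBlocks A 0 0 D * P =
      diagonal (Sum.elim hA.eigenvalues hD.eigenvalues) := by
    simp [P, fromBlocks_transpose, fromBlocks_multiply, hA.transpose_eigenvectorUnitary_mul_mul,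
      hD.transpose_eigenvectorUnitary_mul_mul, fromBlocks_diagonal]
  rw [← signature_toQuadraticForm'_transpose_mul_mul _ hP, hdiag,
    ← signature_toQuadraticForm'_transpose_mul_mul A Unitary.isUnit_coe,
    ← signature_toQuadraticForm'_transpose_mul_mul D Unitary.isUnit_coe,
    hA.transpose_eigenvectorUnitary_mul_mul, hD.transpose_eigenvectorUnitary_mul_mul]
  simp only [toQuadraticForm'_diagonal, signature_weightedSumSquares_sumElim]

lemma signature_toQuadraticForm'_fromBlocks {A : Matrix m m ℝ} (B : Matrix m n ℝ)
    (C : Matrix n n ℝ) (hA : A.IsHermitian) (hAdet : IsUnit A.det)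
    (hS : (fromBlocks A B Bᴴ C).IsHermitian) :
    signature (fromBlocks A B Bᴴ C).toQuadraticForm' =
      signature A.toQuadraticForm' + signature (C - Bᴴ * A⁻¹ * B).toQuadraticForm' := by
  let := invertibleOfIsUnitDet A hAdet
  let L : Matrix (m ⊕ n) (m ⊕ n) ℝ := fromBlocks 1 (A⁻¹ * B) 0 1
  have hL : IsUnit L := isUnit_fromBlocks_zero₂₁.mpr ⟨isUnit_one, isUnit_one⟩
  have hLDL : fromBlocks A B Bᴴ C = Lᵀ * fromBlocks A 0 0 (C - Bᴴ * A⁻¹ * B) * L := by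
    rw [fromBlocks_eq_of_invertible₁₁ A]
    simp [L, fromBlocks_transpose, transpose_nonsing_inv, (isHermitian_iff_isSymm.mp hA).eq,
      invOf_eq_nonsing_inv]
  rw [hLDL, signature_toQuadraticForm'_transpose_mul_mul _ hL,
    signature_toQuadraticForm'_fromBlocks_zero hA ((hA.fromBlocks₁₁ B C).mp hS)]

section Schur

variable [CommRing R] {A : Matrix m m R} {B : Matrix m n R} {C : Matrix n m R} {D : Matrix n n R}

lemma isUnit_det_schur_of_isUnit_det_fromBlocks (hA : IsUnit A.det)
    (h : IsUnit (fromBlocks A B C D).det) : IsUnit (D - C * A⁻¹ * B).det := by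
  let := invertibleOfIsUnitDet A hA
  rw [det_fromBlocks₁₁, invOf_eq_nonsing_inv] at h
  exact isUnit_of_mul_isUnit_right h

lemma toBlocks₂₂_inv_fromBlocks (hA : IsUnit A.det) (h : IsUnit (fromBlocks A B C D).det) :
    (fromBlocks A B C D)⁻¹.toBlocks₂₂ = (D - C * A⁻¹ * B)⁻¹ := by
  let := invertibleOfIsUnitDet A hA
  let := invertibleOfIsUnitDet _ h
  let := invertibleOfFromBlocks₁₁Invertible A B C D
  rw [← invOf_eq_nonsing_inv (fromBlocks A B C D), invOf_fromBlocks₁₁_eq,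
    toBlocks_fromBlocks₂₂]
  simp only [invOf_eq_nonsing_inv]

end Schur

end Matrix

lemma matSignature_eq_signature_toQuadraticForm' {n : Type*} [Fintype n] [DecidableEq n]
    {M : Matrix n n ℝ} (hM : M.IsHermitian) :
    matSignature hM = signature M.toQuadraticForm' := by
  rw [signature_toQuadraticForm'_of_transpose_mul_mul_eq_diagonal Unitary.isUnit_coe
    hM.transpose_eigenvectorUnitary_mul_mul, matSignature]

theorem lazutkin_signature_general {m n : Type*} [Fintype m] [Fintype n]
    [DecidableEq m] [DecidableEq n]
    (S : Matrix (m ⊕ n) (m ⊕ n) ℝ) (hS : S.IsHermitian) (hSinv : IsUnit S.det)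
    (hA : (S.toBlocks₁₁).IsHermitian) (hAinv : IsUnit (S.toBlocks₁₁).det)
    (hC' : ((S⁻¹).toBlocks₂₂).IsHermitian) :
    matSignature hS = matSignature hA + matSignature hC' := by
  set A := S.toBlocks₁₁
  set B := S.toBlocks₁₂
  set C := S.toBlocks₂₂
  have hblocks : S = fromBlocks A B Bᴴ C := by
    have h21 : S.toBlocks₂₁ = Bᴴ := congr_arg toBlocks₂₁ hS.symm
    rw [← h21, fromBlocks_toBlocks]
  have hS' : (fromBlocks A B Bᴴ C).IsHermitian := hblocks ▸ hS
  have hSdet : IsUnit (fromBlocks A B Bᴴ C).det := hblocks ▸ hSinv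
  have hschur : (C - Bᴴ * A⁻¹ * B).IsSymm :=
    isHermitian_iff_isSymm.mp ((hA.fromBlocks₁₁ B C).mp hS')
  calc matSignature hS = signature S.toQuadraticForm' :=
        matSignature_eq_signature_toQuadraticForm' hS
    _ = signature A.toQuadraticForm' + signature (C - Bᴴ * A⁻¹ * B).toQuadraticForm' := by
      rw [hblocks, signature_toQuadraticForm'_fromBlocks B C hA hAinv hS']
    _ = signature A.toQuadraticForm' + signature (C - Bᴴ * A⁻¹ * B)⁻¹.toQuadraticForm' := by
      rw [signature_toQuadraticForm'_inv hschur
        (isUnit_det_schur_of_isUnit_det_fromBlocks hAinv hSdet)]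
    _ = matSignature hA + matSignature hC' := by
      rw [matSignature_eq_signature_toQuadraticForm', matSignature_eq_signature_toQuadraticForm',
        hblocks, toBlocks₂₂_inv_fromBlocks hAinv hSdet]

/-- Lazutkin's lemma: for a symmetric invertible block matrix
    `S = [[A, B], [Bᵀ, C]]` with inverse `S⁻¹ = [[A', B'], [(B')ᵀ, C']]`, if `A`
    and `C'` are invertible then `sgn(S) = sgn(A) + sgn(C')`. -/
theorem lazutkin_signature {m n : Type*} [Fintype m] [Fintype n]
    [DecidableEq m] [DecidableEq n]
    (S : Matrix (m ⊕ n) (m ⊕ n) ℝ) (hS : S.IsHermitian) (hSinv : IsUnit S.det)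
    (hA : (S.toBlocks₁₁).IsHermitian) (hAinv : IsUnit (S.toBlocks₁₁).det)
    (hC' : ((S⁻¹).toBlocks₂₂).IsHermitian) (hC'inv : IsUnit ((S⁻¹).toBlocks₂₂).det) :
    matSignature hS = matSignature hA + matSignature hC' :=
  lazutkin_signature_general S hS hSinv hA hAinv hC'
end

section
/- For y < -√2 and 0 ≤ s < m(y) = −y − √(y²−2), the Fenchel–Legendre transform Λ*(s) = sup_t [st − Λ(t)] of Λ(t) = m(y)t − (1/2)∫log(1 + 2t/(x−y)) σ_sc(dx) is achieved at τ_s = (s² + 2s√(y²−2)) / (4(m(y) − s)), and equals Λ*(s) = −s²/8 − s/(2m(y)) − (1/2)log(1 − s/m(y)). -/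
/-!
On its domain, `s t - Λ t = (s - m) t + g t / 2` with
`g t = ∫ log (1 + 2 t / (x - y)) dσ_sc(x)`. Differentiating under the integral sign and
evaluating the Stieltjes transform of the semicircle law through an explicit arcsine primitive
gives `g' t = 2 m(y - 2 t)`. As `m` is increasing on `(-∞, -√2]`, the objective is concave, so
it is maximal where `m(y - 2 t) = m(y) - s`. Every `z ≤ -√2` equals `-(w / 2 + 1 / w)` with
`w = m(z) ∈ (0, √2]`, which turns this critical point into `τ_s`; the value then follows from
the primitive `log m - m² / 4` of `m`.
-/

open MeasureTheory Real Set

theorem isMaxOn_Ioi_of_hasDerivAt_of_antitoneOn {f f' : ℝ → ℝ} {a b : ℝ}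
    (hf : ∀ x ∈ Ioi a, HasDerivAt f (f' x) x) (hf' : AntitoneOn f' (Ioi a)) (hb : b ∈ Ioi a)
    (hb0 : f' b = 0) : IsMaxOn f (Ioi a) b := by
  have hderiv : ∀ x ∈ Ioi a, deriv f x = f' x := fun x hx => (hf x hx).deriv
  have hdiff : DifferentiableOn ℝ f (Ioi a) := fun x hx =>
    (hf x hx).differentiableAt.differentiableWithinAt
  refine isMaxOn_Ioi_of_deriv (hf b hb).continuousAt (hdiff.mono Ioo_subset_Ioi_self)
    (hdiff.mono (Ioi_subset_Ioi hb.out.le)) (fun x hx => ?_) (fun x hx => ?_)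
  · rw [hderiv x (Ioo_subset_Ioi_self hx), ← hb0]
    exact hf' (Ioo_subset_Ioi_self hx) hb hx.2.le
  · have hxa : x ∈ Ioi a := Ioi_subset_Ioi hb.out.le hx
    rw [hderiv x hxa, ← hb0]
    exact hf' hb hxa hx.out.le

section StieltjesTransform

variable {a z x : ℝ}

theorem hasDerivAt_sqrt_sq_sub_sq (hx : x ∈ Ioo (-a) a) :
    HasDerivAt (fun x => √(a ^ 2 - x ^ 2)) (-x / √(a ^ 2 - x ^ 2)) x := by
  have hpos : 0 < a ^ 2 - x ^ 2 := by nlinarith [hx.1, hx.2]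
  refine (((hasDerivAt_pow 2 x).const_sub (a ^ 2)).sqrt hpos.ne').congr_deriv ?_
  field_simp
  norm_num

theorem hasDerivAt_arcsin_div (hx : x ∈ Ioo (-a) a) :
    HasDerivAt (fun x => arcsin (x / a)) (1 / √(a ^ 2 - x ^ 2)) x := by
  have ha : 0 < a := by linarith [hx.1, hx.2]
  have hsq : √(1 - (x / a) ^ 2) = √(a ^ 2 - x ^ 2) / a := by
    rw [div_pow, one_sub_div (by positivity), sqrt_div' _ (by positivity), sqrt_sq ha.le]
  have hne : x / a ≠ -1 ∧ x / a ≠ 1 := by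
    constructor <;> intro h <;> rw [div_eq_iff ha.ne'] at h <;> linarith [hx.1, hx.2]
  refine ((hasDerivAt_arcsin hne.1 hne.2).comp x ((hasDerivAt_id x).div_const a)).congr_deriv ?_
  rw [hsq]
  field_simp

theorem hasDerivAt_arcsin_moebius (hz : z < -a) (hx : x ∈ Ioo (-a) a) :
    HasDerivAt (fun x => arcsin ((a ^ 2 - z * x) / (a * (x - z))))
      (√(z ^ 2 - a ^ 2) / ((x - z) * √(a ^ 2 - x ^ 2))) x := by
  have ha : 0 < a := by linarith [hx.1, hx.2]
  have hxz : 0 < x - z := by linarith [hx.1]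
  set u := (a ^ 2 - z * x) / (a * (x - z))
  set D := √(z ^ 2 - a ^ 2)
  set S := √(a ^ 2 - x ^ 2)
  have hD : D ^ 2 = z ^ 2 - a ^ 2 := sq_sqrt (by nlinarith)
  have hS : S ^ 2 = a ^ 2 - x ^ 2 := sq_sqrt (by nlinarith [hx.1, hx.2])
  have hDpos : 0 < D := sqrt_pos.2 (by nlinarith)
  have hSpos : 0 < S := sqrt_pos.2 (by nlinarith [hx.1, hx.2])
  have hsq : √(1 - u ^ 2) = D * S / (a * (x - z)) := by
    rw [← sqrt_sq (by positivity : 0 ≤ D * S / (a * (x - z)))]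
    congr 1
    simp only [u]
    field_simp
    linear_combination (-(a ^ 2) + x ^ 2) * hD - D ^ 2 * hS
  have hu : 0 < 1 - u ^ 2 := sqrt_pos.1 (by rw [hsq]; positivity)
  have hne : u ≠ -1 ∧ u ≠ 1 := by
    constructor <;> rintro h <;> rw [h] at hu <;> norm_num at hu
  have hdu := (((hasDerivAt_id x).const_mul z).const_sub (a ^ 2)).div
    (((hasDerivAt_id x).sub_const z).const_mul a) (by positivity)
  refine ((hasDerivAt_arcsin hne.1 hne.2).comp x hdu).congr_deriv ?_
  rw [hsq]
  simp only [id_eq]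
  field_simp
  linear_combination -hD

theorem hasDerivAt_stieltjes_primitive (hz : z < -a) (hx : x ∈ Ioo (-a) a) :
    HasDerivAt (fun x => √(a ^ 2 - x ^ 2) - z * arcsin (x / a)
        - √(z ^ 2 - a ^ 2) * arcsin ((a ^ 2 - z * x) / (a * (x - z))))
      (√(a ^ 2 - x ^ 2) / (x - z)) x := by
  have hxz : 0 < x - z := by linarith [hx.1]
  have hS : 0 < √(a ^ 2 - x ^ 2) := sqrt_pos.2 (by nlinarith [hx.1, hx.2])
  have hD : √(z ^ 2 - a ^ 2) ^ 2 = z ^ 2 - a ^ 2 := sq_sqrt (by nlinarith [hx.1, hx.2])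
  refine (((hasDerivAt_sqrt_sq_sub_sq hx).sub ((hasDerivAt_arcsin_div hx).const_mul z)).sub
    ((hasDerivAt_arcsin_moebius hz hx).const_mul _)).congr_deriv ?_
  field_simp
  linear_combination -hD - sq_sqrt (by nlinarith [hx.1, hx.2] : 0 ≤ a ^ 2 - x ^ 2)

theorem integral_sqrt_sq_sub_sq_div_sub (ha : 0 < a) (hz : z < -a) :
    ∫ x in -a..a, √(a ^ 2 - x ^ 2) / (x - z) = π * (-z - √(z ^ 2 - a ^ 2)) := by
  have hle : -a ≤ a := by linarith
  have hxz : ∀ x ∈ Icc (-a) a, x - z ≠ 0 := fun x hx => by linarith [hx.1]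
  have hden : ∀ x ∈ Icc (-a) a, a * (x - z) ≠ 0 := fun x hx => mul_ne_zero ha.ne' (hxz x hx)
  rw [intervalIntegral.integral_eq_sub_of_hasDerivAt_of_le hle ?cont
    (fun x hx => hasDerivAt_stieltjes_primitive hz hx)
    ((ContinuousOn.div (by fun_prop) (by fun_prop) hxz).intervalIntegrable_of_Icc hle)]
  · have h1 : (a ^ 2 - z * a) / (a * (a - z)) = 1 := by
      rw [div_eq_one_iff_eq (hden a ⟨hle, le_rfl⟩)]; ring
    have h2 : (a ^ 2 - z * -a) / (a * (-a - z)) = -1 := by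
      rw [div_eq_iff (hden (-a) ⟨le_rfl, hle⟩)]; ring
    simp only [h1, h2, neg_sq, sub_self, sqrt_zero, div_self ha.ne', neg_div, arcsin_neg,
      arcsin_one]
    ring
  · exact (by fun_prop : ContinuousOn (fun x => √(a ^ 2 - x ^ 2) - z * arcsin (x / a)) _).sub
      (continuousOn_const.mul (continuous_arcsin.comp_continuousOn
        ((continuousOn_const.sub (by fun_prop)).div (by fun_prop) hden)))

end StieltjesTransform

noncomputable def semicircleStieltjes (z : ℝ) : ℝ := -z - √(z ^ 2 - 2)

section SemicircleStieltjes

variable {z w : ℝ}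

theorem sq_sub_two_nonneg_of_le_neg_sqrt_two (hz : z ≤ -√2) : 0 ≤ z ^ 2 - 2 := by
  simpa using (sqrt_le_left (by linarith [sqrt_nonneg 2])).1 (by linarith : √2 ≤ -z)

theorem sq_sub_two_pos_of_lt_neg_sqrt_two (hz : z < -√2) : 0 < z ^ 2 - 2 := by
  simpa using lt_sq_of_sqrt_lt (by linarith : √2 < -z)

theorem neg_add_sqrt_sq_sub_two_pos (hz : z ≤ -√2) : 0 < -z + √(z ^ 2 - 2) := by
  linarith [sqrt_pos.2 two_pos, sqrt_nonneg (z ^ 2 - 2)]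

theorem semicircleStieltjes_eq_two_div (hz : z ≤ -√2) :
    semicircleStieltjes z = 2 / (-z + √(z ^ 2 - 2)) := by
  rw [semicircleStieltjes, eq_div_iff (neg_add_sqrt_sq_sub_two_pos hz).ne']
  linear_combination -sq_sqrt (sq_sub_two_nonneg_of_le_neg_sqrt_two hz)

theorem semicircleStieltjes_pos (hz : z ≤ -√2) : 0 < semicircleStieltjes z := by
  rw [semicircleStieltjes_eq_two_div hz]
  exact div_pos two_pos (neg_add_sqrt_sq_sub_two_pos hz)

theorem semicircleStieltjes_lt_sqrt_two (hz : z < -√2) : semicircleStieltjes z < √2 := by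
  rw [semicircleStieltjes_eq_two_div hz.le, div_lt_iff₀ (neg_add_sqrt_sq_sub_two_pos hz.le)]
  nlinarith [sqrt_nonneg (z ^ 2 - 2), sqrt_pos.2 two_pos, sq_sqrt (zero_le_two (α := ℝ))]

theorem monotoneOn_semicircleStieltjes : MonotoneOn semicircleStieltjes (Iic (-√2)) := by
  intro z₁ hz₁ z₂ hz₂ h
  have := neg_add_sqrt_sq_sub_two_pos hz₂
  rw [semicircleStieltjes_eq_two_div hz₁, semicircleStieltjes_eq_two_div hz₂]
  gcongr 2 / (-?_ + √(?_ - 2))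
  nlinarith [hz₂.out, sqrt_pos.2 two_pos]

theorem semicircleStieltjes_neg_half_add_inv (hw : 0 < w) (hw2 : w ≤ √2) :
    semicircleStieltjes (-(w / 2 + w⁻¹)) = w := by
  have hsq : (-(w / 2 + w⁻¹)) ^ 2 - 2 = (w⁻¹ - w / 2) ^ 2 := by field_simp; ring
  have hnn : 0 ≤ w⁻¹ - w / 2 := by
    rw [show w⁻¹ - w / 2 = (2 - w ^ 2) / (2 * w) by field_simp]
    have := (le_sqrt hw.le zero_le_two).1 hw2
    exact div_nonneg (by linarith) (by positivity)
  rw [semicircleStieltjes, hsq, sqrt_sq hnn]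
  ring

theorem neg_half_add_inv_semicircleStieltjes (hz : z ≤ -√2) :
    -(semicircleStieltjes z / 2 + (semicircleStieltjes z)⁻¹) = z := by
  have hm := (semicircleStieltjes_pos hz).ne'
  field_simp
  rw [semicircleStieltjes]
  linear_combination -sq_sqrt (sq_sub_two_nonneg_of_le_neg_sqrt_two hz)

theorem integral_semicircle_div_sub (hz : z < -√2) :
    ∫ x in -√2..√2, 2 / (x - z) * ((1 / π) * √(2 - x ^ 2)) =
      2 * semicircleStieltjes z := by
  have h := integral_sqrt_sq_sub_sq_div_sub (sqrt_pos.2 two_pos) hz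
  rw [sq_sqrt zero_le_two] at h
  have hπ := pi_pos.ne'
  calc _ = ∫ x in -√2..√2, 2 / π * (√(2 - x ^ 2) / (x - z)) :=
        intervalIntegral.integral_congr fun x _ => by ring
    _ = _ := by rw [intervalIntegral.integral_const_mul, h, semicircleStieltjes]; field_simp

theorem hasDerivAt_semicircleStieltjes (hz : z < -√2) :
    HasDerivAt semicircleStieltjes (semicircleStieltjes z / √(z ^ 2 - 2)) z := by
  have hpos := sq_sub_two_pos_of_lt_neg_sqrt_two hz
  refine ((hasDerivAt_id z).neg.sub
    (((hasDerivAt_pow 2 z).sub_const 2).sqrt hpos.ne')).congr_deriv ?_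
  have := sqrt_pos.2 hpos
  simp only [semicircleStieltjes]
  field_simp
  ring

/-- Up to an additive constant, minus the logarithmic potential `∫ log (x - z) dσ_sc(x)`. -/
noncomputable def semicircleStieltjesPrimitive (z : ℝ) : ℝ :=
  log (semicircleStieltjes z) - semicircleStieltjes z ^ 2 / 4

theorem hasDerivAt_semicircleStieltjesPrimitive (hz : z < -√2) :
    HasDerivAt semicircleStieltjesPrimitive (semicircleStieltjes z) z := by
  have hm := semicircleStieltjes_pos hz.le
  have hdm := hasDerivAt_semicircleStieltjes hz
  refine ((hdm.log hm.ne').sub ((hdm.pow 2).div_const 4)).congr_deriv ?_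
  have := sqrt_pos.2 (sq_sub_two_pos_of_lt_neg_sqrt_two hz)
  field_simp
  simp only [semicircleStieltjes]
  linear_combination 2 * sq_sqrt (sq_sub_two_nonneg_of_le_neg_sqrt_two hz.le)

end SemicircleStieltjes

section SemicircleLogIntegral

variable {u y t : ℝ}

theorem one_add_two_mul_div_pos (hu : 0 < u) (ht : 0 < u + 2 * t) :
    0 < 1 + 2 * t / u := by
  rw [one_add_div hu.ne']
  positivity

theorem hasDerivAt_log_one_add_two_mul_div (hu : 0 < u) (ht : 0 < u + 2 * t) :
    HasDerivAt (fun t => log (1 + 2 * t / u)) (2 / (u + 2 * t)) t := by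
  refine ((((hasDerivAt_id t).const_mul 2).div_const u).const_add 1 |>.log
    (one_add_two_mul_div_pos hu ht).ne').congr_deriv ?_
  rw [id_eq, one_add_div hu.ne']
  field_simp

noncomputable def semicircleLogIntegral (y t : ℝ) : ℝ :=
  ∫ x in -√2..√2, log (1 + 2 * t / (x - y)) * ((1 / π) * √(2 - x ^ 2))

theorem hasDerivAt_semicircleLogIntegral' (hy : y < -√2) (ht : (√2 + y) / 2 < t) :
    HasDerivAt (semicircleLogIntegral y)
      (∫ x in -√2..√2, 2 / (x - y + 2 * t) * ((1 / π) * √(2 - x ^ 2))) t := by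
  obtain ⟨c, hc, hct⟩ := exists_between ht
  set δ := -√2 - y + 2 * c
  have hle : -√2 ≤ √2 := by linarith [sqrt_nonneg 2]
  have hxy : ∀ x ∈ Icc (-√2) √2, 0 < x - y := fun x hx => by linarith [hx.1]
  have hδ : ∀ x ∈ Icc (-√2) √2, ∀ t' ∈ Ioi c, 0 < δ ∧ δ ≤ x - y + 2 * t' :=
    fun x hx t' ht' => ⟨by linarith, by linarith [hx.1, ht'.out]⟩
  have hIoc : uIoc (-√2) √2 ⊆ Icc (-√2) √2 := by
    rw [uIoc_of_le hle]
    exact Ioc_subset_Icc_self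
  have hF_int : IntervalIntegrable
      (fun x => log (1 + 2 * t / (x - y)) * ((1 / π) * √(2 - x ^ 2))) volume (-√2) √2 := by
    refine (ContinuousOn.mul ?_ (by fun_prop)).intervalIntegrable_of_Icc hle
    refine ContinuousOn.log ?_ fun x hx => (one_add_two_mul_div_pos (hxy x hx) ?_).ne'
    · exact continuousOn_const.add
        (continuousOn_const.div (by fun_prop) fun x hx => (hxy x hx).ne')
    · linarith [hδ x hx t hct]
  refine (intervalIntegral.hasDerivAt_integral_of_dominated_loc_of_deriv_le
    (F := fun t x => log (1 + 2 * t / (x - y)) * ((1 / π) * √(2 - x ^ 2)))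
    (F' := fun t x => 2 / (x - y + 2 * t) * ((1 / π) * √(2 - x ^ 2)))
    (bound := fun x => 2 / δ * ((1 / π) * √(2 - x ^ 2))) (Ioi_mem_nhds hct)
    (.of_forall fun _ => ?_) hF_int ?_ (.of_forall fun x hx t' ht' => ?_)
    ((by fun_prop : Continuous _).intervalIntegrable _ _)
    (.of_forall fun x hx t' ht' => ?_)).2
  · exact (by fun_prop : Measurable _).aestronglyMeasurable
  · exact (by fun_prop : Measurable _).aestronglyMeasurable
  · obtain ⟨hδ0, hδx⟩ := hδ x (hIoc hx) t' ht'
    rw [norm_mul, Real.norm_of_nonneg (by positivity : (0 : ℝ) ≤ (1 / π) * √(2 - x ^ 2)),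
      Real.norm_of_nonneg (div_nonneg zero_le_two (by linarith))]
    gcongr
  · have hδx := (hδ x (hIoc hx) t' ht').2
    exact (hasDerivAt_log_one_add_two_mul_div (hxy x (hIoc hx)) (by linarith)).mul_const _

theorem hasDerivAt_semicircleLogIntegral (hy : y < -√2) (ht : (√2 + y) / 2 < t) :
    HasDerivAt (semicircleLogIntegral y) (2 * semicircleStieltjes (y - 2 * t)) t := by
  refine (hasDerivAt_semicircleLogIntegral' hy ht).congr_deriv ?_
  rw [← integral_semicircle_div_sub (by linarith)]
  exact intervalIntegral.integral_congr fun x _ => by ring_nf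

theorem hasDerivAt_semicircleStieltjesPrimitive_sub_two_mul (ht : y - 2 * t < -√2) :
    HasDerivAt (fun t => semicircleStieltjesPrimitive y - semicircleStieltjesPrimitive (y - 2 * t))
      (2 * semicircleStieltjes (y - 2 * t)) t := by
  refine (((hasDerivAt_semicircleStieltjesPrimitive ht).comp t
    (((hasDerivAt_id t).const_mul 2).const_sub y)).const_sub _).congr_deriv ?_
  simp [mul_comm]

theorem semicircleLogIntegral_eq_sub (hy : y < -√2) (ht : 0 ≤ t) :
    semicircleLogIntegral y t =
      semicircleStieltjesPrimitive y - semicircleStieltjesPrimitive (y - 2 * t) := by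
  have hdom : ∀ u ∈ Icc 0 t, (√2 + y) / 2 < u := fun u hu => by linarith [hu.1]
  have hdom' : ∀ u ∈ Icc 0 t, y - 2 * u < -√2 := fun u hu => by linarith [hdom u hu]
  refine eq_of_has_deriv_right_eq (f := semicircleLogIntegral y)
    (g := fun t => semicircleStieltjesPrimitive y - semicircleStieltjesPrimitive (y - 2 * t))
    (f' := fun t => 2 * semicircleStieltjes (y - 2 * t))
    (fun u hu => ?_) (fun u hu => ?_) (fun u hu => ?_) (fun u hu => ?_) ?_ t ⟨ht, le_rfl⟩
  · exact (hasDerivAt_semicircleLogIntegral hy (hdom u (Ico_subset_Icc_self hu))).hasDerivWithinAt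
  · exact (hasDerivAt_semicircleStieltjesPrimitive_sub_two_mul
      (hdom' u (Ico_subset_Icc_self hu))).hasDerivWithinAt
  · exact (hasDerivAt_semicircleLogIntegral hy (hdom u hu)).continuousAt.continuousWithinAt
  · exact (hasDerivAt_semicircleStieltjesPrimitive_sub_two_mul
      (hdom' u hu)).continuousAt.continuousWithinAt
  · simp [semicircleLogIntegral]

theorem isMaxOn_legendre_semicircleLogIntegral {s τ : ℝ} (hy : y < -√2)
    (hτ : (√2 + y) / 2 < τ)
    (hcrit : semicircleStieltjes (y - 2 * τ) = semicircleStieltjes y - s) :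
    IsMaxOn (fun t => (s - semicircleStieltjes y) * t + semicircleLogIntegral y t / 2)
      (Ioi ((√2 + y) / 2)) τ := by
  refine isMaxOn_Ioi_of_hasDerivAt_of_antitoneOn
    (f' := fun t => s - semicircleStieltjes y + semicircleStieltjes (y - 2 * t))
    (fun t ht => ?_) (fun a ha b hb hab => ?_) hτ (by simp [hcrit])
  · exact (((hasDerivAt_id t).const_mul _).add
      ((hasDerivAt_semicircleLogIntegral hy ht).div_const 2)).congr_deriv (by simp)
  · have hb' : y - 2 * b ≤ -√2 := by linarith [hb.out]
    have ha' : y - 2 * a ≤ -√2 := by linarith [ha.out]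
    exact (add_le_add_iff_left _).2 (monotoneOn_semicircleStieltjes hb' ha' (by linarith))

end SemicircleLogIntegral

/-- For `y < -√2` and `0 ≤ s < m(y) = −y − √(y²−2)`, the Fenchel–Legendre
    transform `Λ*(s) = sup_t [s t − Λ(t)]` of
    `Λ(t) = m(y) t − (1/2) ∫ log(1 + 2t/(x−y)) σ_sc(dx)` (with `Λ = +∞` for
    `t < (√2+y)/2`) is achieved at `τ_s = (s² + 2 s √(y²−2)) / (4(m(y) − s))`
    and equals `−s²/8 − s/(2 m(y)) − (1/2) log(1 − s/m(y))`. -/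
theorem Lambda_legendre_transform (y s : ℝ) (hy : y < -Real.sqrt 2)
    (m : ℝ) (hm : m = -y - Real.sqrt (y ^ 2 - 2))
    (hs0 : 0 ≤ s) (hsm : s < m)
    (Λ : ℝ → ℝ)
    (hΛ : Λ = fun t => m * t - (1 / 2) *
      ∫ x in Set.Icc (-Real.sqrt 2) (Real.sqrt 2),
        Real.log (1 + 2 * t / (x - y)) * ((1 / π) * Real.sqrt (2 - x ^ 2)))
    (τ : ℝ) (hτ : τ = (s ^ 2 + 2 * s * Real.sqrt (y ^ 2 - 2)) / (4 * (m - s))) :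
    (Real.sqrt 2 + y) / 2 < τ
    ∧ (∀ t : ℝ, (Real.sqrt 2 + y) / 2 < t → s * t - Λ t ≤ s * τ - Λ τ)
    ∧ s * τ - Λ τ = -s ^ 2 / 8 - s / (2 * m) - (1 / 2) * Real.log (1 - s / m) := by
  have hm_eq : semicircleStieltjes y = m := hm.symm
  have hm0 : 0 < m := hm_eq ▸ semicircleStieltjes_pos hy.le
  have hms : 0 < m - s := by linarith
  have hym : y = -(m / 2 + m⁻¹) := hm_eq ▸ (neg_half_add_inv_semicircleStieltjes hy.le).symm
  have hd : √(y ^ 2 - 2) = m⁻¹ - m / 2 := by linarith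
  have hτ0 : 0 ≤ τ := hτ ▸ div_nonneg (by positivity) (by linarith)
  have hdom : (√2 + y) / 2 < τ := by linarith
  have hcrit : semicircleStieltjes (y - 2 * τ) = m - s := by
    have hyτ : y - 2 * τ = -((m - s) / 2 + (m - s)⁻¹) := by
      rw [hτ, hd, hym]
      field_simp
      ring
    rw [hyτ]
    exact semicircleStieltjes_neg_half_add_inv hms
      (by linarith [semicircleStieltjes_lt_sqrt_two hy])
  have hobj : ∀ t, s * t - Λ t = (s - m) * t + semicircleLogIntegral y t / 2 := fun t => by
    rw [hΛ]
    beta_reduce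
    rw [integral_Icc_eq_integral_Ioc,
      ← intervalIntegral.integral_of_le (by linarith [sqrt_nonneg 2]), semicircleLogIntegral]
    ring
  refine ⟨hdom, fun t ht => ?_, ?_⟩
  · rw [hobj, hobj, ← hm_eq]
    exact isMaxOn_iff.1 (isMaxOn_legendre_semicircleLogIntegral hy hdom (by rw [hcrit, hm_eq])) t ht
  · rw [hobj, semicircleLogIntegral_eq_sub hy hτ0, semicircleStieltjesPrimitive,
      semicircleStieltjesPrimitive, hcrit, hm_eq, one_sub_div hm0.ne', log_div hms.ne' hm0.ne', hτ,
      hd]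
    field_simp
    ring
end
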